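/- arXiv:2510.02308 — 2 statements merged into one kernel-verified Lean document; each statement's English description precedes it below -/
import Mathlib

section
/- Let s > 0, let y₁,…,y_n ∈ ℝ^p and η₁,…,η_n ∈ ℝ^p be arbitrary vectors, and set x_i = y_i + η_i. Let A and Ā be the n×n matrices with entries A_{ij} = K_s(x_i − x_j) and Ā_{ij} = K_s(y_i − y_j). Then ‖A − Ā‖_∞ ≤ (√(2/e)/s) · max_{1≤i≤n} Σ_{j=1}^n ‖η_i − η_j‖₂. -/
open scoped BigOperators

/-- The Gaussian kernel with bandwidth `s` on `ℝ^p`: `K_s(z) = exp(−‖z‖₂²/s²)`. -/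
noncomputable def gaussKernel {p : ℕ} (s : ℝ) (z : EuclideanSpace ℝ (Fin p)) : ℝ :=
  Real.exp (-‖z‖ ^ 2 / s ^ 2)

lemma gauss_aux (v : ℝ) : 2 * |v| * Real.exp (-v ^ 2) ≤ Real.sqrt (2 / Real.exp 1) := by
  set w := |v| with hw
  have hw0 : 0 ≤ w := abs_nonneg v
  have hv2 : v ^ 2 = w ^ 2 := (sq_abs v).symm
  rw [hv2]
  have hsqrt : Real.sqrt (2 / Real.exp 1) = Real.sqrt 2 * Real.exp (-(1/2 : ℝ)) := by
    rw [div_eq_mul_inv, ← Real.exp_neg, Real.sqrt_mul (by norm_num), ← Real.exp_half]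
    norm_num
  rw [hsqrt]
  have hexp : w ^ 2 + 1/2 ≤ Real.exp (w ^ 2 - 1/2) := by
    have := Real.add_one_le_exp (w ^ 2 - 1/2)
    linarith
  have h2 : (Real.sqrt 2) ^ 2 = 2 := Real.sq_sqrt (by norm_num)
  have hkey : 2 * w ≤ Real.sqrt 2 * Real.exp (w ^ 2 - 1/2) := by
    have hs2 : 0 < Real.sqrt 2 := by positivity
    nlinarith [sq_nonneg (Real.sqrt 2 * w - 1), mul_le_mul_of_nonneg_left hexp hs2.le]
  have hpos : 0 < Real.exp (-w ^ 2) := Real.exp_pos _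
  calc 2 * w * Real.exp (-w ^ 2)
      ≤ Real.sqrt 2 * Real.exp (w ^ 2 - 1/2) * Real.exp (-w ^ 2) :=
        mul_le_mul_of_nonneg_right hkey hpos.le
    _ = Real.sqrt 2 * Real.exp (-(1/2 : ℝ)) := by
        rw [mul_assoc, ← Real.exp_add]; ring_nf

lemma gauss_lip (s : ℝ) (hs : 0 < s) (a b : ℝ) :
    |Real.exp (-a ^ 2 / s ^ 2) - Real.exp (-b ^ 2 / s ^ 2)|
      ≤ Real.sqrt (2 / Real.exp 1) / s * |a - b| := by
  set C := Real.sqrt (2 / Real.exp 1) / s with hC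
  have hderiv : ∀ t : ℝ, HasDerivAt (fun t => Real.exp (-t ^ 2 / s ^ 2))
      (Real.exp (-t ^ 2 / s ^ 2) * (-(2 * t) / s ^ 2)) t := by
    intro t
    have h1 : HasDerivAt (fun t : ℝ => -t ^ 2 / s ^ 2) (-(2 * t) / s ^ 2) t := by
      have := ((hasDerivAt_pow 2 t).neg).div_const (s ^ 2)
      simpa using this
    exact (Real.hasDerivAt_exp _).comp t h1
  have hbound : ∀ t : ℝ, ‖Real.exp (-t ^ 2 / s ^ 2) * (-(2 * t) / s ^ 2)‖ ≤ C := by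
    intro t
    have key := gauss_aux (t / s)
    have h1 : (t / s) ^ 2 = t ^ 2 / s ^ 2 := by ring
    rw [h1, abs_div, abs_of_pos hs] at key
    have : ‖Real.exp (-t ^ 2 / s ^ 2) * (-(2 * t) / s ^ 2)‖
        = (2 * (|t| / s) * Real.exp (-(t ^ 2 / s ^ 2))) / s := by
      rw [Real.norm_eq_abs, abs_mul, abs_of_pos (Real.exp_pos _), abs_div,
        abs_neg, abs_mul, abs_of_pos (show (0:ℝ) < 2 by norm_num),
        abs_of_pos (show (0:ℝ) < s ^ 2 by positivity)]
      rw [neg_div]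
      field_simp
    rw [this, hC]
    exact (div_le_div_iff_of_pos_right hs).mpr (by simpa [neg_div] using key)
  have := Convex.norm_image_sub_le_of_norm_hasDerivWithin_le
    (f := fun t => Real.exp (-t ^ 2 / s ^ 2))
    (f' := fun t => Real.exp (-t ^ 2 / s ^ 2) * (-(2 * t) / s ^ 2))
    (C := C) (s := Set.univ)
    (fun x _ => (hderiv x).hasDerivWithinAt) (fun x _ => hbound x)
    convex_univ (Set.mem_univ b) (Set.mem_univ a)
  simpa [Real.norm_eq_abs] using this

/-- With `x_i = y_i + η_i`, `A_{ij} = K_s(x_i − x_j)`, `Ā_{ij} = K_s(y_i − y_j)`, the maximum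
absolute row-sum norm satisfies
`‖A − Ā‖_∞ ≤ (√(2/e)/s) · max_{1≤i≤n} Σ_{j=1}^n ‖η_i − η_j‖₂`. -/
theorem rowSum_diff_adjacency_le {p n : ℕ} (s : ℝ) (hs : 0 < s)
    (y η : Fin n → EuclideanSpace ℝ (Fin p)) :
    (⨆ i : Fin n, ∑ j : Fin n,
        |gaussKernel s ((y i + η i) - (y j + η j)) - gaussKernel s (y i - y j)|)
      ≤ Real.sqrt (2 / Real.exp 1) / s * ⨆ i : Fin n, ∑ j : Fin n, ‖η i - η j‖ := by
  set C := Real.sqrt (2 / Real.exp 1) / s with hC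
  have hC0 : 0 ≤ C := by positivity
  rcases Nat.eq_zero_or_pos n with hn | hn
  · subst hn
    simp [Real.iSup_of_isEmpty]
  · haveI : Nonempty (Fin n) := ⟨⟨0, hn⟩⟩
    have hterm : ∀ i j : Fin n,
        |gaussKernel s ((y i + η i) - (y j + η j)) - gaussKernel s (y i - y j)|
          ≤ C * ‖η i - η j‖ := by
      intro i j
      have h1 := gauss_lip s hs ‖(y i + η i) - (y j + η j)‖ ‖y i - y j‖
      simp only [gaussKernel]
      refine h1.trans ?_
      apply mul_le_mul_of_nonneg_left _ hC0
      have h2 : ((y i + η i) - (y j + η j)) - (y i - y j) = η i - η j := by abel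
      calc |‖(y i + η i) - (y j + η j)‖ - ‖y i - y j‖|
          ≤ ‖((y i + η i) - (y j + η j)) - (y i - y j)‖ := abs_norm_sub_norm_le _ _
        _ = ‖η i - η j‖ := by rw [h2]
    apply ciSup_le
    intro i
    calc (∑ j : Fin n,
        |gaussKernel s ((y i + η i) - (y j + η j)) - gaussKernel s (y i - y j)|)
        ≤ ∑ j : Fin n, C * ‖η i - η j‖ := Finset.sum_le_sum fun j _ => hterm i j
      _ = C * ∑ j : Fin n, ‖η i - η j‖ := by rw [Finset.mul_sum]
      _ ≤ C * ⨆ i : Fin n, ∑ j : Fin n, ‖η i - η j‖ := by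
          refine mul_le_mul_of_nonneg_left ?_ hC0
          exact le_ciSup (Set.Finite.bddAbove
            (Set.finite_range fun i : Fin n => ∑ j : Fin n, ‖η i - η j‖)) i
end

section
/- Let G ∈ ℝ^{d×d} be symmetric positive definite, let H₁,…,H_k ∈ ℝ^{d×d} be symmetric, set S_α = G^{−1/2} H_α G^{−1/2}, let κ = κ(S₁,…,S_k), and fix ε > 0 and r > 0 with ε·r·κ < 1. Let Γ₁,…,Γ_k ∈ ℝ^{d×k}, set γ_β = ‖G^{−1/2}Γ_β‖₂ and γ* = (Σ_{β=1}^k γ_β²)^{1/2}. Then for every n ∈ ℝ^k with ‖n‖₂ ≤ r, every a ∈ ℝ^d and every b ∈ ℝ^k, writing S = Σ_α n^α S_α and Γ = Σ_β n^β Γ_β, it holds that (a − Γb)ᵀ G^{−1/2} (I_d − εS)^{−2} G^{−1/2} (a − Γb) ≥ (1 + εrκ)^{−2} · ( aᵀG⁻¹a − 2 r γ* √(aᵀG⁻¹a) ‖b‖₂ ). -/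
open scoped BigOperators

/-- For symmetric matrices `S₁,…,S_k ∈ ℝ^{d×d}`,
`κ(S₁,…,S_k) = max_{‖v‖₂=1} (Σ_α (vᵀ S_α v)²)^{1/2}`. -/
noncomputable def kappa {d k : ℕ} (S : Fin k → Matrix (Fin d) (Fin d) ℝ) : ℝ :=
  ⨆ v : {v : Fin d → ℝ // ∑ i, v i ^ 2 = 1},
    Real.sqrt (∑ α, (dotProduct v.1 ((S α).mulVec v.1)) ^ 2)

/-- Spectral (ℓ²-operator) norm of a real matrix. -/
noncomputable def specNorm {m n : ℕ} (M : Matrix (Fin m) (Fin n) ℝ) : ℝ :=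
  ‖LinearMap.toContinuousLinearMap (Matrix.toEuclideanLin M)‖

/-- The positive semidefinite square root of a positive semidefinite matrix (as in the old Mathlib). -/
noncomputable def Matrix.PosSemidef.sqrt {n : Type*} [Fintype n] [DecidableEq n] {A : Matrix n n ℝ}
    (hA : A.PosSemidef) : Matrix n n ℝ :=
  (hA.1.eigenvectorUnitary : Matrix n n ℝ) * Matrix.diagonal (Real.sqrt ∘ hA.1.eigenvalues) *
    (star hA.1.eigenvectorUnitary : Matrix n n ℝ)

/-- `S_α = G^{−1/2} H_α G^{−1/2}`, where `G^{1/2}` is the positive (semi)definite square root of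
the positive definite matrix `G`. -/
noncomputable def Smat {d k : ℕ} (G : Matrix (Fin d) (Fin d) ℝ) (hG : G.PosDef)
    (H : Fin k → Matrix (Fin d) (Fin d) ℝ) (α : Fin k) : Matrix (Fin d) (Fin d) ℝ :=
  hG.posSemidef.sqrt⁻¹ * H α * hG.posSemidef.sqrt⁻¹

lemma Matrix.PosSemidef.posSemidef_sqrt {n : Type*} [Fintype n] [DecidableEq n]
    {A : Matrix n n ℝ} (hA : A.PosSemidef) : hA.sqrt.PosSemidef := by
  unfold Matrix.PosSemidef.sqrt
  rw [Matrix.star_eq_conjTranspose]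
  exact (Matrix.PosSemidef.diagonal (fun i => Real.sqrt_nonneg _)).mul_mul_conjTranspose_same _

lemma Matrix.PosSemidef.sqrt_mul_self {n : Type*} [Fintype n] [DecidableEq n]
    {A : Matrix n n ℝ} (hA : A.PosSemidef) : hA.sqrt * hA.sqrt = A := by
  have hU : (star hA.1.eigenvectorUnitary : Matrix n n ℝ) *
      (hA.1.eigenvectorUnitary : Matrix n n ℝ) = 1 := Unitary.coe_star_mul_self _
  have hD : Matrix.diagonal (Real.sqrt ∘ hA.1.eigenvalues) *
      Matrix.diagonal (Real.sqrt ∘ hA.1.eigenvalues) =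
      Matrix.diagonal (RCLike.ofReal ∘ hA.1.eigenvalues) := by
    rw [Matrix.diagonal_mul_diagonal]
    congr 1
    ext i
    simp only [Function.comp_apply, RCLike.ofReal_real_eq_id, id]
    exact Real.mul_self_sqrt (hA.eigenvalues_nonneg i)
  unfold Matrix.PosSemidef.sqrt
  conv_rhs => rw [hA.1.spectral_theorem]
  rw [Unitary.conjStarAlgAut_apply, ← hD]
  simp only [Matrix.mul_assoc]
  rw [← Matrix.mul_assoc _ (hA.1.eigenvectorUnitary : Matrix n n ℝ), hU, Matrix.one_mul]

section Helpers

open Matrix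

lemma dotsq {d : ℕ} (v : Fin d → ℝ) : v ⬝ᵥ v = ∑ i, v i ^ 2 := by
  simp [dotProduct, sq]

lemma dot_self_nonneg {d : ℕ} (v : Fin d → ℝ) : 0 ≤ v ⬝ᵥ v := by
  rw [dotsq]; positivity

lemma dot_self_pos {d : ℕ} {v : Fin d → ℝ} (hv : v ≠ 0) : 0 < v ⬝ᵥ v := by
  rcases (dot_self_nonneg v).lt_or_eq with h | h
  · exact h
  · exfalso; apply hv
    rw [dotsq] at h
    ext i
    have := (Finset.sum_eq_zero_iff_of_nonneg (fun i _ => sq_nonneg (v i))).1 h.symm i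
      (Finset.mem_univ i)
    simpa [pow_eq_zero_iff] using this

lemma dot_symm_mulVec {d : ℕ} {B : Matrix (Fin d) (Fin d) ℝ} (hB : B.IsHermitian)
    (u v : Fin d → ℝ) : u ⬝ᵥ B.mulVec v = (B.mulVec u) ⬝ᵥ v := by
  rw [Matrix.dotProduct_mulVec, ← Matrix.mulVec_transpose,
    ← Matrix.conjTranspose_eq_transpose_of_trivial, hB.eq]

lemma dot_cs {d : ℕ} (u v : Fin d → ℝ) :
    u ⬝ᵥ v ≤ Real.sqrt (u ⬝ᵥ u) * Real.sqrt (v ⬝ᵥ v) := by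
  rw [dotsq, dotsq]
  exact Real.sum_mul_le_sqrt_mul_sqrt _ _ _

lemma star_triv {d : ℕ} (v : Fin d → ℝ) : star v = v := by ext i; simp

lemma herm_smul {d : ℕ} {B : Matrix (Fin d) (Fin d) ℝ} (hB : B.IsHermitian) (c : ℝ) :
    (c • B).IsHermitian := by
  unfold Matrix.IsHermitian
  rw [Matrix.conjTranspose_smul, hB.eq, star_trivial]

lemma sum_mulVec' {m n k : ℕ} (A : Fin k → Matrix (Fin m) (Fin n) ℝ) (b : Fin n → ℝ) :
    (∑ β, A β).mulVec b = ∑ β, (A β).mulVec b := by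
  ext i
  simp [Matrix.mulVec, dotProduct, Finset.sum_apply, Matrix.sum_apply, Finset.sum_mul]
  exact Finset.sum_comm

lemma dot_sum {d k : ℕ} (v : Fin d → ℝ) (y : Fin k → Fin d → ℝ) :
    v ⬝ᵥ (∑ β, y β) = ∑ β, v ⬝ᵥ y β := by
  simp [dotProduct, Finset.sum_apply, Matrix.sum_apply, Finset.mul_sum]
  exact Finset.sum_comm

lemma abs_sum_mul_le {k : ℕ} (f g : Fin k → ℝ) :
    |∑ α, f α * g α| ≤ Real.sqrt (∑ α, f α ^ 2) * Real.sqrt (∑ α, g α ^ 2) := by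
  rcases abs_cases (∑ α, f α * g α) with ⟨h, _⟩ | ⟨h, _⟩
  · rw [h]; exact Real.sum_mul_le_sqrt_mul_sqrt _ _ _
  · rw [h]
    calc -∑ α, f α * g α = ∑ α, (-f α) * g α := by
          simp [neg_mul]
      _ ≤ Real.sqrt (∑ α, (-f α) ^ 2) * Real.sqrt (∑ α, g α ^ 2) :=
          Real.sum_mul_le_sqrt_mul_sqrt _ _ _
      _ = Real.sqrt (∑ α, f α ^ 2) * Real.sqrt (∑ α, g α ^ 2) := by simp [neg_sq]

/-- The main quadratic-form bound: if the Rayleigh quotient of the symmetric matrix `A` is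
bounded by `t < 1` in absolute value, then `uᵀ((I−A)²)⁻¹u ≥ (1+t)⁻²‖u‖²`. -/
lemma core_quad_bound {d : ℕ} (A : Matrix (Fin d) (Fin d) ℝ) (hA : A.IsHermitian) (t : ℝ)
    (ht0 : 0 ≤ t) (ht1 : t < 1)
    (hbound : ∀ v : Fin d → ℝ, |v ⬝ᵥ A.mulVec v| ≤ t * (v ⬝ᵥ v)) (u : Fin d → ℝ) :
    (1 + t)⁻¹ ^ 2 * (u ⬝ᵥ u) ≤ u ⬝ᵥ ((((1 : Matrix (Fin d) (Fin d) ℝ) - A) ^ 2)⁻¹).mulVec u := by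
  set M : Matrix (Fin d) (Fin d) ℝ := 1 - A with hM
  have hMH : M.IsHermitian := (Matrix.isHermitian_one).sub hA
  have hquad : ∀ x : Fin d → ℝ, x ⬝ᵥ M.mulVec x = x ⬝ᵥ x - x ⬝ᵥ A.mulVec x := by
    intro x
    rw [hM, Matrix.sub_mulVec, Matrix.one_mulVec, dotProduct_sub]
  have hMpd : M.PosDef := by
    refine Matrix.PosDef.of_dotProduct_mulVec_pos hMH fun x hx => ?_
    rw [star_triv, hquad]
    have h1 := abs_le.1 (hbound x)
    have h2 := dot_self_pos hx
    nlinarith [h1.1, h1.2]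
  have hdet : IsUnit M.det := hMpd.det_pos.ne'.isUnit
  have hs : (0:ℝ) < 1 + t := by linarith
  have psd1 : (((1 + t) • (1 : Matrix (Fin d) (Fin d) ℝ)) - M).PosSemidef := by
    refine Matrix.PosSemidef.of_dotProduct_mulVec_nonneg
      ((herm_smul Matrix.isHermitian_one _).sub hMH) fun x => ?_
    rw [star_triv, Matrix.sub_mulVec, dotProduct_sub, Matrix.smul_mulVec,
      Matrix.one_mulVec, dotProduct_smul, hquad]
    have h1 := abs_le.1 (hbound x)
    have h2 := dot_self_nonneg x
    simp only [smul_eq_mul]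
    nlinarith [h1.1]
  set N : Matrix (Fin d) (Fin d) ℝ := hMpd.posSemidef.sqrt with hN
  have hNH : N.IsHermitian := hMpd.posSemidef.posSemidef_sqrt.isHermitian
  have hN2 : N * N = M := hMpd.posSemidef.sqrt_mul_self
  have psd2 : (((1 + t) • M) - M * M).PosSemidef := by
    have h := psd1.conjTranspose_mul_mul_same N
    have he : Nᴴ * (((1 + t) • (1 : Matrix (Fin d) (Fin d) ℝ)) - M) * N
        = ((1 + t) • M) - M * M := by
      rw [hNH.eq, ← hN2]
      simp only [Matrix.mul_sub, Matrix.sub_mul, Matrix.mul_smul, Matrix.smul_mul,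
        Matrix.mul_one, ← Matrix.mul_assoc]
    rwa [he] at h
  set w : Fin d → ℝ := M⁻¹.mulVec u with hw
  have hu : M.mulVec w = u := by
    rw [hw, Matrix.mulVec_mulVec, Matrix.mul_nonsing_inv _ hdet, Matrix.one_mulVec]
  have hinv : (((1 : Matrix (Fin d) (Fin d) ℝ) - A) ^ 2)⁻¹ = M⁻¹ * M⁻¹ := by
    rw [← hM, pow_two, Matrix.mul_inv_rev]
  have hrhs : u ⬝ᵥ ((((1 : Matrix (Fin d) (Fin d) ℝ) - A) ^ 2)⁻¹).mulVec u = w ⬝ᵥ w := by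
    rw [hinv, ← Matrix.mulVec_mulVec, dot_symm_mulVec hMH.inv, ← hw]
  have huu : u ⬝ᵥ u = w ⬝ᵥ ((M * M).mulVec w) := by
    conv_lhs => rw [← hu]
    rw [← dot_symm_mulVec hMH, Matrix.mulVec_mulVec]
  have key1 : w ⬝ᵥ ((M * M).mulVec w) ≤ (1 + t) * (w ⬝ᵥ M.mulVec w) := by
    have h := psd2.dotProduct_mulVec_nonneg w
    rw [star_triv, Matrix.sub_mulVec, dotProduct_sub, Matrix.smul_mulVec,
      dotProduct_smul, smul_eq_mul] at h
    linarith
  have key2 : w ⬝ᵥ M.mulVec w ≤ (1 + t) * (w ⬝ᵥ w) := by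
    have h := psd1.dotProduct_mulVec_nonneg w
    rw [star_triv, Matrix.sub_mulVec, dotProduct_sub, Matrix.smul_mulVec,
      Matrix.one_mulVec, dotProduct_smul, smul_eq_mul] at h
    linarith
  have key3 : 0 ≤ w ⬝ᵥ M.mulVec w := by
    have h := hMpd.posSemidef.dotProduct_mulVec_nonneg w
    rwa [star_triv] at h
  rw [hrhs]
  have : u ⬝ᵥ u ≤ (1 + t) ^ 2 * (w ⬝ᵥ w) := by
    rw [huu]
    nlinarith
  rw [inv_pow, inv_mul_le_iff₀ (by positivity)]
  linarith [this]

lemma kappa_nonneg {d k : ℕ} (S : Fin k → Matrix (Fin d) (Fin d) ℝ) : 0 ≤ kappa S :=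
  Real.iSup_nonneg fun _ => Real.sqrt_nonneg _

lemma kappa_bdd {d k : ℕ} (S : Fin k → Matrix (Fin d) (Fin d) ℝ) :
    BddAbove (Set.range fun v : {v : Fin d → ℝ // ∑ i, v i ^ 2 = 1} =>
      Real.sqrt (∑ α, (dotProduct v.1 ((S α).mulVec v.1)) ^ 2)) := by
  set f : (Fin d → ℝ) → ℝ :=
    fun v => Real.sqrt (∑ α, (dotProduct v ((S α).mulVec v)) ^ 2) with hf
  set T : Set (Fin d → ℝ) := {v | ∑ i, v i ^ 2 = 1} with hT
  have hfc : Continuous f := by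
    apply Real.continuous_sqrt.comp
    apply continuous_finset_sum
    intro α _
    apply Continuous.pow
    simp only [dotProduct, Matrix.mulVec]
    apply continuous_finset_sum
    intro i _
    exact (continuous_apply i).mul
      (continuous_finset_sum _ fun j _ => continuous_const.mul (continuous_apply j))
  have hTc : IsCompact T := by
    apply Metric.isCompact_of_isClosed_isBounded
    · exact isClosed_eq (continuous_finset_sum _ fun i _ => (continuous_apply i).pow 2)
        continuous_const
    · apply Bornology.IsBounded.subset (Metric.isBounded_closedBall (x := (0 : Fin d → ℝ)) (r := 1))
      intro v hv
      simp only [Metric.mem_closedBall, dist_zero_right]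
      rw [pi_norm_le_iff_of_nonneg zero_le_one]
      intro i
      rw [Real.norm_eq_abs, abs_le_one_iff_mul_self_le_one, ← sq]
      calc v i ^ 2 ≤ ∑ j, v j ^ 2 :=
            Finset.single_le_sum (fun j _ => sq_nonneg (v j)) (Finset.mem_univ i)
        _ = 1 := hv
  have hsub : (Set.range fun v : {v : Fin d → ℝ // ∑ i, v i ^ 2 = 1} => f v.1) ⊆ f '' T := by
    rintro _ ⟨v, rfl⟩
    exact ⟨v.1, v.2, rfl⟩
  exact ((hTc.image hfc).bddAbove).mono hsub

lemma sqrt_sum_sq_le_kappa_mul {d k : ℕ} (S : Fin k → Matrix (Fin d) (Fin d) ℝ) (v : Fin d → ℝ) :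
    Real.sqrt (∑ α, (v ⬝ᵥ (S α).mulVec v) ^ 2) ≤ kappa S * (∑ i, v i ^ 2) := by
  by_cases hv : v = 0
  · simp [hv]
  · set c : ℝ := ∑ i, v i ^ 2 with hc
    have hcpos : 0 < c := by
      obtain ⟨i, hi⟩ := Function.ne_iff.1 hv
      exact Finset.sum_pos' (fun j _ => sq_nonneg (v j))
        ⟨i, Finset.mem_univ i, by simpa using pow_pos (abs_pos.2 hi) 2 |>.trans_eq (sq_abs _)⟩
    set vh : Fin d → ℝ := (Real.sqrt c)⁻¹ • v with hvh
    have hsq : ((Real.sqrt c)⁻¹) ^ 2 = c⁻¹ := by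
      rw [← Real.sqrt_inv, Real.sq_sqrt (by positivity)]
    have hunit : ∑ i, vh i ^ 2 = 1 := by
      simp only [hvh, Pi.smul_apply, smul_eq_mul, mul_pow, ← Finset.mul_sum, hsq]
      field_simp
      exact hc.symm
    have hdot : ∀ α, vh ⬝ᵥ (S α).mulVec vh = c⁻¹ * (v ⬝ᵥ (S α).mulVec v) := by
      intro α
      rw [hvh, Matrix.mulVec_smul, dotProduct_smul, smul_dotProduct,
        smul_eq_mul, smul_eq_mul, ← mul_assoc, ← sq, hsq]
    have hk : Real.sqrt (∑ α, (vh ⬝ᵥ (S α).mulVec vh) ^ 2) ≤ kappa S :=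
      le_ciSup (kappa_bdd S) ⟨vh, hunit⟩
    have heq : Real.sqrt (∑ α, (vh ⬝ᵥ (S α).mulVec vh) ^ 2)
        = c⁻¹ * Real.sqrt (∑ α, (v ⬝ᵥ (S α).mulVec v) ^ 2) := by
      simp only [hdot, mul_pow, ← Finset.mul_sum]
      rw [Real.sqrt_mul (by positivity), Real.sqrt_sq (by positivity)]
    rw [heq] at hk
    calc Real.sqrt (∑ α, (v ⬝ᵥ (S α).mulVec v) ^ 2)
        = c * (c⁻¹ * Real.sqrt (∑ α, (v ⬝ᵥ (S α).mulVec v) ^ 2)) := by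
          field_simp
      _ ≤ c * kappa S := mul_le_mul_of_nonneg_left hk hcpos.le
      _ = kappa S * c := mul_comm _ _

lemma enorm_eq {l : ℕ} (v : Fin l → ℝ) :
    ‖(WithLp.equiv 2 (Fin l → ℝ)).symm v‖ = Real.sqrt (∑ i, v i ^ 2) := by
  rw [EuclideanSpace.norm_eq]
  congr 1
  refine Finset.sum_congr rfl fun i _ => ?_
  rw [WithLp.equiv_symm_apply, PiLp.toLp_apply, Real.norm_eq_abs, sq_abs]

lemma specNorm_nonneg {m n : ℕ} (M : Matrix (Fin m) (Fin n) ℝ) : 0 ≤ specNorm M :=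
  norm_nonneg _

lemma mulVec_norm_le {m n : ℕ} (M : Matrix (Fin m) (Fin n) ℝ) (b : Fin n → ℝ) :
    Real.sqrt (∑ i, (M.mulVec b i) ^ 2) ≤ specNorm M * Real.sqrt (∑ i, b i ^ 2) := by
  have h := (LinearMap.toContinuousLinearMap (Matrix.toEuclideanLin M)).le_opNorm
    ((WithLp.equiv 2 (Fin n → ℝ)).symm b)
  rw [LinearMap.coe_toContinuousLinearMap'] at h
  rwa [WithLp.equiv_symm_apply, Matrix.toEuclideanLin_apply_piLp_toLp, ← WithLp.equiv_symm_apply,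
    enorm_eq, ← WithLp.equiv_symm_apply, enorm_eq] at h

lemma sqrt_sum_sq_sum_smul_le {d k : ℕ} (nv : Fin k → ℝ) (y : Fin k → Fin d → ℝ) :
    Real.sqrt (∑ i, ((∑ β, nv β • y β) i) ^ 2)
      ≤ ∑ β, |nv β| * Real.sqrt (∑ i, (y β i) ^ 2) := by
  have hE : ∀ v : Fin d → ℝ, (WithLp.equiv 2 (Fin d → ℝ)).symm v
      = (WithLp.linearEquiv 2 ℝ (Fin d → ℝ)).symm v := fun _ => rfl
  calc Real.sqrt (∑ i, ((∑ β, nv β • y β) i) ^ 2)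
      = ‖(WithLp.linearEquiv 2 ℝ (Fin d → ℝ)).symm (∑ β, nv β • y β)‖ := by
        rw [← hE, enorm_eq]
    _ = ‖∑ β, nv β • (WithLp.linearEquiv 2 ℝ (Fin d → ℝ)).symm (y β)‖ := by
        rw [map_sum]
        simp only [_root_.map_smul]
    _ ≤ ∑ β, ‖nv β • (WithLp.linearEquiv 2 ℝ (Fin d → ℝ)).symm (y β)‖ :=
        norm_sum_le _ _
    _ = ∑ β, |nv β| * Real.sqrt (∑ i, (y β i) ^ 2) := by
        refine Finset.sum_congr rfl fun β _ => ?_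
        rw [norm_smul, Real.norm_eq_abs, ← hE, enorm_eq]

end Helpers

open Matrix in
/-- Lower bound on the quadratic form
`(a − Γb)ᵀ G^{−1/2} (I_d − εS)^{−2} G^{−1/2} (a − Γb)` where `S = Σ_α n^α S_α`,
`Γ = Σ_β n^β Γ_β`, `γ_β = ‖G^{−1/2}Γ_β‖₂` and `γ* = (Σ_β γ_β²)^{1/2}`:
it is at least `(1 + εrκ)^{−2}·(aᵀG⁻¹a − 2rγ*√(aᵀG⁻¹a)‖b‖₂)`. -/
theorem quadratic_form_lower_bound {d k : ℕ} (G : Matrix (Fin d) (Fin d) ℝ) (hG : G.PosDef)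
    (H : Fin k → Matrix (Fin d) (Fin d) ℝ) (hH : ∀ α, (H α).IsSymm)
    (ε r : ℝ) (hε : 0 < ε) (hr : 0 < r)
    (hcond : ε * r * kappa (Smat G hG H) < 1)
    (Γ : Fin k → Matrix (Fin d) (Fin k) ℝ)
    (nv : Fin k → ℝ) (hnv : Real.sqrt (∑ α, nv α ^ 2) ≤ r)
    (a : Fin d → ℝ) (b : Fin k → ℝ) :
    (1 + ε * r * kappa (Smat G hG H))⁻¹ ^ 2 *
        (dotProduct a (G⁻¹.mulVec a) -
          2 * r * Real.sqrt (∑ β, specNorm (hG.posSemidef.sqrt⁻¹ * Γ β) ^ 2) *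
            Real.sqrt (dotProduct a (G⁻¹.mulVec a)) * Real.sqrt (∑ i, b i ^ 2)) ≤
      dotProduct (a - (∑ β, nv β • Γ β).mulVec b)
        ((hG.posSemidef.sqrt⁻¹ *
            (((1 : Matrix (Fin d) (Fin d) ℝ) - ε • ∑ α, nv α • Smat G hG H α) ^ 2)⁻¹ *
          hG.posSemidef.sqrt⁻¹).mulVec (a - (∑ β, nv β • Γ β).mulVec b)) := by
  classical
  set Q : Matrix (Fin d) (Fin d) ℝ := hG.posSemidef.sqrt⁻¹ with hQdef
  have hQH : Q.IsHermitian := hG.posSemidef.posSemidef_sqrt.isHermitian.inv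
  have hQQ : Q * Q = G⁻¹ := by
    rw [hQdef, ← Matrix.mul_inv_rev, hG.posSemidef.sqrt_mul_self]
  have hκ0 : 0 ≤ kappa (Smat G hG H) := kappa_nonneg _
  set t : ℝ := ε * r * kappa (Smat G hG H) with ht
  have ht0 : 0 ≤ t := by positivity
  have hSH : ∀ α, (Smat G hG H α).IsHermitian := by
    intro α
    have hHα : (H α).IsHermitian := by
      unfold Matrix.IsHermitian
      rw [Matrix.conjTranspose_eq_transpose_of_trivial, (hH α).eq]
    show (Q * H α * Q)ᴴ = Q * H α * Q
    rw [Matrix.conjTranspose_mul, Matrix.conjTranspose_mul, hQH.eq, hHα.eq,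
      ← Matrix.mul_assoc]
  set A : Matrix (Fin d) (Fin d) ℝ := ε • ∑ α, nv α • Smat G hG H α with hAdef
  have hAH : A.IsHermitian := by
    apply herm_smul
    unfold Matrix.IsHermitian
    rw [Matrix.conjTranspose_sum]
    exact Finset.sum_congr rfl fun α _ => (herm_smul (hSH α) _).eq
  have hbound : ∀ v : Fin d → ℝ, |v ⬝ᵥ A.mulVec v| ≤ t * (v ⬝ᵥ v) := by
    intro v
    rw [hAdef, Matrix.smul_mulVec, dotProduct_smul, smul_eq_mul, abs_mul,
      abs_of_pos hε]
    have hv1 : v ⬝ᵥ (∑ α, nv α • Smat G hG H α).mulVec v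
        = ∑ α, nv α * (v ⬝ᵥ (Smat G hG H α).mulVec v) := by
      rw [sum_mulVec', dot_sum]
      refine Finset.sum_congr rfl fun α _ => ?_
      rw [Matrix.smul_mulVec, dotProduct_smul, smul_eq_mul]
    rw [hv1]
    have h2 : |∑ α, nv α * (v ⬝ᵥ (Smat G hG H α).mulVec v)|
        ≤ Real.sqrt (∑ α, nv α ^ 2)
          * Real.sqrt (∑ α, (v ⬝ᵥ (Smat G hG H α).mulVec v) ^ 2) :=
      abs_sum_mul_le _ _
    have h3 : Real.sqrt (∑ α, (v ⬝ᵥ (Smat G hG H α).mulVec v) ^ 2)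
        ≤ kappa (Smat G hG H) * (∑ i, v i ^ 2) := sqrt_sum_sq_le_kappa_mul _ v
    have h4 : Real.sqrt (∑ α, nv α ^ 2)
          * Real.sqrt (∑ α, (v ⬝ᵥ (Smat G hG H α).mulVec v) ^ 2)
        ≤ r * (kappa (Smat G hG H) * (∑ i, v i ^ 2)) := by
      apply mul_le_mul hnv h3 (Real.sqrt_nonneg _) hr.le
    rw [ht, dotsq]
    calc ε * |∑ α, nv α * (v ⬝ᵥ (Smat G hG H α).mulVec v)|
        ≤ ε * (r * (kappa (Smat G hG H) * (∑ i, v i ^ 2))) :=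
          mul_le_mul_of_nonneg_left (h2.trans h4) hε.le
      _ = ε * r * kappa (Smat G hG H) * (∑ i, v i ^ 2) := by ring
  set x : Fin d → ℝ := a - (∑ β, nv β • Γ β).mulVec b with hxdef
  set u : Fin d → ℝ := Q.mulVec x with hudef
  have hcore := core_quad_bound A hAH t ht0 hcond hbound u
  have hgoalr : x ⬝ᵥ ((Q * (((1 : Matrix (Fin d) (Fin d) ℝ) - A) ^ 2)⁻¹ * Q).mulVec x)
      = u ⬝ᵥ ((((1 : Matrix (Fin d) (Fin d) ℝ) - A) ^ 2)⁻¹).mulVec u := by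
    rw [← Matrix.mulVec_mulVec, ← Matrix.mulVec_mulVec, dot_symm_mulVec hQH, ← hudef]
  set p : Fin d → ℝ := Q.mulVec a with hpdef
  set z : Fin d → ℝ := Q.mulVec ((∑ β, nv β • Γ β).mulVec b) with hzdef
  have hu : u = p - z := by rw [hudef, hxdef, Matrix.mulVec_sub]
  have hpp : p ⬝ᵥ p = a ⬝ᵥ G⁻¹.mulVec a := by
    rw [hpdef, ← dot_symm_mulVec hQH, Matrix.mulVec_mulVec, hQQ]
  have hz : z = ∑ β, nv β • ((Q * Γ β).mulVec b) := by
    rw [hzdef, Matrix.mulVec_mulVec, Matrix.mul_sum]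
    have : ∀ β, Q * (nv β • Γ β) = nv β • (Q * Γ β) := fun β => Matrix.mul_smul _ _ _
    simp only [this]
    rw [sum_mulVec']
    exact Finset.sum_congr rfl fun β _ => Matrix.smul_mulVec _ _ _
  set γs : ℝ := Real.sqrt (∑ β, specNorm (Q * Γ β) ^ 2) with hγs
  have hγs0 : 0 ≤ γs := Real.sqrt_nonneg _
  have hb0 : 0 ≤ Real.sqrt (∑ i, b i ^ 2) := Real.sqrt_nonneg _
  have hnz : Real.sqrt (∑ i, z i ^ 2) ≤ r * γs * Real.sqrt (∑ i, b i ^ 2) := by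
    calc Real.sqrt (∑ i, z i ^ 2)
        ≤ ∑ β, |nv β| * Real.sqrt (∑ i, ((Q * Γ β).mulVec b i) ^ 2) := by
          rw [hz]; exact sqrt_sum_sq_sum_smul_le _ _
      _ ≤ ∑ β, |nv β| * (specNorm (Q * Γ β) * Real.sqrt (∑ i, b i ^ 2)) := by
          refine Finset.sum_le_sum fun β _ => ?_
          exact mul_le_mul_of_nonneg_left (mulVec_norm_le _ _) (abs_nonneg _)
      _ = (∑ β, |nv β| * specNorm (Q * Γ β)) * Real.sqrt (∑ i, b i ^ 2) := by
          rw [Finset.sum_mul]; simp only [mul_assoc]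
      _ ≤ (Real.sqrt (∑ β, |nv β| ^ 2) * γs) * Real.sqrt (∑ i, b i ^ 2) := by
          apply mul_le_mul_of_nonneg_right _ hb0
          exact Real.sum_mul_le_sqrt_mul_sqrt _ _ _
      _ ≤ r * γs * Real.sqrt (∑ i, b i ^ 2) := by
          apply mul_le_mul_of_nonneg_right _ hb0
          apply mul_le_mul_of_nonneg_right _ hγs0
          simpa [sq_abs] using hnv
  have hpz : p ⬝ᵥ z ≤ Real.sqrt (p ⬝ᵥ p) * (r * γs * Real.sqrt (∑ i, b i ^ 2)) := by
    calc p ⬝ᵥ z ≤ Real.sqrt (p ⬝ᵥ p) * Real.sqrt (z ⬝ᵥ z) := dot_cs p z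
      _ ≤ Real.sqrt (p ⬝ᵥ p) * (r * γs * Real.sqrt (∑ i, b i ^ 2)) := by
          apply mul_le_mul_of_nonneg_left _ (Real.sqrt_nonneg _)
          rw [dotsq]; exact hnz
  have hzz : 0 ≤ z ⬝ᵥ z := dot_self_nonneg z
  have huu : u ⬝ᵥ u = p ⬝ᵥ p - 2 * (p ⬝ᵥ z) + z ⬝ᵥ z := by
    rw [hu, sub_dotProduct, dotProduct_sub, dotProduct_sub,
      dotProduct_comm z p]
    ring
  have hinner : a ⬝ᵥ G⁻¹.mulVec a
      - 2 * r * γs * Real.sqrt (a ⬝ᵥ G⁻¹.mulVec a) * Real.sqrt (∑ i, b i ^ 2)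
      ≤ u ⬝ᵥ u := by
    rw [← hpp, huu]
    nlinarith [hpz]
  calc (1 + t)⁻¹ ^ 2 *
        (a ⬝ᵥ G⁻¹.mulVec a
          - 2 * r * γs * Real.sqrt (a ⬝ᵥ G⁻¹.mulVec a) * Real.sqrt (∑ i, b i ^ 2))
      ≤ (1 + t)⁻¹ ^ 2 * (u ⬝ᵥ u) := by
        apply mul_le_mul_of_nonneg_left hinner (by positivity)
    _ ≤ u ⬝ᵥ ((((1 : Matrix (Fin d) (Fin d) ℝ) - A) ^ 2)⁻¹).mulVec u := hcore
    _ = x ⬝ᵥ ((Q * (((1 : Matrix (Fin d) (Fin d) ℝ) - A) ^ 2)⁻¹ * Q).mulVec x) := hgoalr.symm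
end
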